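/- Let φ > 0 be the unit-norm ground state of H = L + W on the complete graph with V vertices, where W_m = 0 is the unique smallest eigenvalue of W and the spectral ratio of W is at most κ. Then √(V−1)·√(1−φ(m)²) ≥ Σ_{u≠m} φ(u) ≥ (1/κ)·√(V−1)·√(1−φ(m)²). -/
import Mathlib


open Matrix

/-- The smallest eigenvalue of a Hermitian matrix. -/
noncomputable def lamMin {n : ℕ} {A : Matrix (Fin n) (Fin n) ℝ}
    (hA : A.IsHermitian) : ℝ :=
  ⨅ i, hA.eigenvalues i

/-- The combinatorial Laplacian of the complete graph on `V` vertices: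
`L = V·I − J`, where `J` is the all-ones matrix. -/
def cgL (V : ℕ) : Matrix (Fin V) (Fin V) ℝ :=
  (V : ℝ) • (1 : Matrix (Fin V) (Fin V) ℝ) - Matrix.of (fun _ _ => (1 : ℝ))

/-- For the unit-norm positive ground state `φ` of `H = L + W` on the
complete graph, with `W m = 0` the unique smallest eigenvalue of `W` and spectral ratio
at most `κ`, one has
`√(V−1) √(1−φ(m)²) ≥ Σ_{u≠m} φ(u) ≥ (1/κ) √(V−1) √(1−φ(m)²)`. -/
theorem ground_state_l1_bounds {V : ℕ} (hV : 2 ≤ V) (W : Fin V → ℝ) (m : Fin V) (κ : ℝ)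
    (hWm : W m = 0) (hmin : ∀ u : Fin V, u ≠ m → 0 < W u)
    (hratio : ∀ u v : Fin V, u ≠ m → v ≠ m → W u ≤ κ * W v)
    (hH : (cgL V + Matrix.diagonal W).IsHermitian)
    (φ : Fin V → ℝ) (hpos : ∀ u, 0 < φ u) (hnorm : ∑ u : Fin V, (φ u) ^ 2 = 1)
    (hEig : (cgL V + Matrix.diagonal W).mulVec φ = lamMin hH • φ) :
    (∑ u ∈ Finset.univ.erase m, φ u)
        ≤ Real.sqrt ((V : ℝ) - 1) * Real.sqrt (1 - (φ m) ^ 2) ∧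
      (1 / κ) * Real.sqrt ((V : ℝ) - 1) * Real.sqrt (1 - (φ m) ^ 2)
        ≤ ∑ u ∈ Finset.univ.erase m, φ u := by
  set lam := lamMin hH with hlam
  set S' := ∑ u ∈ Finset.univ.erase m, φ u with hS'
  -- key eigenvector identity
  have key : ∀ u : Fin V, ((V:ℝ) + W u - lam) * φ u = ∑ v, φ v := by
    intro u
    have h := congrFun hEig u
    simp only [Matrix.mulVec, dotProduct, cgL, Matrix.add_apply, Matrix.sub_apply,
      Matrix.smul_apply, Matrix.one_apply, Matrix.diagonal_apply, Matrix.of_apply,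
      Pi.smul_apply, smul_eq_mul, sub_mul, add_mul, ite_mul, zero_mul, one_mul,
      mul_ite, mul_zero, mul_one,
      Finset.sum_sub_distrib, Finset.sum_add_distrib, Finset.sum_ite_eq,
      Finset.mem_univ, if_true] at h
    linarith
  have hSpos : 0 < ∑ v, φ v :=
    Finset.sum_pos (fun u _ => hpos u) ⟨m, Finset.mem_univ m⟩
  have hVlam : 0 < (V:ℝ) - lam := by
    have h := key m
    rw [hWm] at h
    nlinarith [hpos m]
  -- κ ≥ 1
  have hne : ∃ u : Fin V, u ≠ m := by
    have : 1 < Fintype.card (Fin V) := by simp; omega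
    exact Fintype.exists_ne_of_one_lt_card this m
  obtain ⟨u₀, hu₀⟩ := hne
  have hκ : 1 ≤ κ := by
    have h1 := hratio u₀ u₀ hu₀ hu₀
    have h2 := hmin u₀ hu₀
    nlinarith
  have hκpos : 0 < κ := by linarith
  -- denominators positive
  have hden : ∀ u : Fin V, 0 < (V:ℝ) + W u - lam := by
    intro u
    have h := key u
    nlinarith [hpos u]
  -- comparability
  have hcomp : ∀ u v : Fin V, u ≠ m → v ≠ m → φ u ≤ κ * φ v := by
    intro u v hu hv
    have hu' := key u
    have hv' := key v
    have hWuv := hratio v u hv hu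
    have h1 : ((V:ℝ) + W v - lam) ≤ κ * ((V:ℝ) + W u - lam) := by nlinarith
    nlinarith [hden u, hden v, hpos u, hpos v, mul_pos (hden u) (hden v)]
  -- sum of squares over erase m
  have hsq : ∑ u ∈ Finset.univ.erase m, (φ u) ^ 2 = 1 - (φ m) ^ 2 := by
    have h := Finset.add_sum_erase Finset.univ (fun u => (φ u)^2) (Finset.mem_univ m)
    rw [hnorm] at h
    have h2 : (φ m)^2 + ∑ x ∈ Finset.univ.erase m, (φ x)^2 = 1 := h
    linarith
  have hsqnn : 0 ≤ 1 - (φ m) ^ 2 := by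
    rw [← hsq]; positivity
  have hS'nn : 0 ≤ S' := Finset.sum_nonneg fun u _ => (hpos u).le
  have hcard : (Finset.univ.erase m).card = V - 1 := by
    rw [Finset.card_erase_of_mem (Finset.mem_univ m)]; simp
  have hcardR : ((Finset.univ.erase m).card : ℝ) = (V:ℝ) - 1 := by
    rw [hcard]; push_cast [Nat.cast_sub (by omega : 1 ≤ V)]; ring
  constructor
  · -- upper bound
    have hCS := sq_sum_le_card_mul_sum_sq (s := Finset.univ.erase m) (f := φ)
    rw [hsq, hcardR] at hCS
    calc S' = Real.sqrt (S' ^ 2) := by rw [Real.sqrt_sq hS'nn]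
      _ ≤ Real.sqrt (((V:ℝ) - 1) * (1 - φ m ^ 2)) := Real.sqrt_le_sqrt hCS
      _ = Real.sqrt ((V:ℝ) - 1) * Real.sqrt (1 - φ m ^ 2) := Real.sqrt_mul (by
          have : (2:ℝ) ≤ (V:ℝ) := by exact_mod_cast hV
          linarith) _
  · -- lower bound
    have hstep : ∀ v ∈ Finset.univ.erase m, 1 - (φ m)^2 ≤ κ * φ v * S' := by
      intro v hv
      have hv' : v ≠ m := (Finset.mem_erase.mp hv).1
      rw [← hsq, hS', Finset.mul_sum]
      apply Finset.sum_le_sum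
      intro u hu
      have hu' : u ≠ m := (Finset.mem_erase.mp hu).1
      have := hcomp u v hu' hv'
      have := hpos u
      nlinarith
    have hsum : ((V:ℝ) - 1) * (1 - (φ m)^2) ≤ κ * S' ^ 2 := by
      have h := Finset.sum_le_sum hstep
      rw [Finset.sum_const, hcard, nsmul_eq_mul] at h
      have : ∑ v ∈ Finset.univ.erase m, κ * φ v * S' = κ * S' ^ 2 := by
        rw [← Finset.sum_mul, ← Finset.mul_sum, ← hS']; ring
      rw [this] at h
      calc ((V:ℝ) - 1) * (1 - (φ m)^2) = ((V-1:ℕ) : ℝ) * (1 - (φ m)^2) := by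
            rw [Nat.cast_sub (by omega : 1 ≤ V)]; push_cast; ring
        _ ≤ κ * S' ^ 2 := h
    -- conclude
    have hfin : (1/κ) * Real.sqrt ((V:ℝ)-1) * Real.sqrt (1 - (φ m)^2)
        = Real.sqrt (((V:ℝ)-1) * (1 - (φ m)^2)) / κ := by
      rw [Real.sqrt_mul (by
        have : (2:ℝ) ≤ (V:ℝ) := by exact_mod_cast hV
        linarith)]
      ring
    rw [hfin, div_le_iff₀ hκpos]
    have h1 : ((V:ℝ)-1) * (1 - (φ m)^2) ≤ (S' * κ)^2 := by nlinarith
    calc Real.sqrt (((V:ℝ)-1) * (1 - (φ m)^2)) ≤ Real.sqrt ((S'*κ)^2) :=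
          Real.sqrt_le_sqrt h1
      _ = S' * κ := Real.sqrt_sq (by positivity)
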